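/- arXiv:math/0008220 — 2 statements merged into one kernel-verified Lean document; each statement's English description precedes it below -/
import Mathlib

section
/- For real s, t with |s| + |t| < 2, the Hessian of ent(s,t) is negative definite: ent_ss < 0, ent_tt < 0, and ent_ss·ent_tt - ent_st^2 > 0. Consequently ent is strictly concave on the open region |s|+|t| < 2. -/
/-!
Write `α = π (p_a + p_b) = arccos ((cos (πt/2) - cos (πs/2)) / 2)`. The four angles `π p_•` are
`(α ± πt/2) / 2` and `(π - α ± πs/2) / 2`, which lie in `(0, π)` on the region, and
`sin (π p_a) sin (π p_b) = sin (π p_c) sin (π p_d) = D' / 4`. Since `L' z = -log (2 sin z)`, the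
terms involving the derivatives of `α` cancel in the gradient, leaving
`ent_s = (log (2 sin π p_c) - log (2 sin π p_d)) / 4` and
`ent_t = (log (2 sin π p_b) - log (2 sin π p_a)) / 4`. Differentiating once more, with
`cot (π p_a) = 2 (sin α - sin (πt/2)) / D'` and its three analogues and the identity
`2 sin² α = sin² (πs/2) + sin² (πt/2) + D'² / 2`, gives the Hessian: its diagonal entries are
negative and its determinant is the constant `π² / 64`. Strict concavity follows by restricting
`ent` to segments, along which the second derivative is the negative definite Hessian form.
-/

open Real

/-- The asymptotic probability `p_a` of an `a`-edge, for tilt `(s, t)`. -/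
noncomputable def pA (s t : ℝ) : ℝ :=
  t / 4 + (1 / (2 * π)) * arccos ((cos (π * t / 2) - cos (π * s / 2)) / 2)

/-- The asymptotic probability `p_b` of a `b`-edge, for tilt `(s, t)`. -/
noncomputable def pB (s t : ℝ) : ℝ :=
  -t / 4 + (1 / (2 * π)) * arccos ((cos (π * t / 2) - cos (π * s / 2)) / 2)

/-- The asymptotic probability `p_c` of a `c`-edge, for tilt `(s, t)`. -/
noncomputable def pC (s t : ℝ) : ℝ :=
  -s / 4 + (1 / (2 * π)) * arccos ((cos (π * s / 2) - cos (π * t / 2)) / 2)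

/-- The asymptotic probability `p_d` of a `d`-edge, for tilt `(s, t)`. -/
noncomputable def pD (s t : ℝ) : ℝ :=
  s / 4 + (1 / (2 * π)) * arccos ((cos (π * s / 2) - cos (π * t / 2)) / 2)

/-- The Lobachevsky function `L(z) = -∫₀^z log|2 sin u| du`. -/
noncomputable def Lob (z : ℝ) : ℝ := -∫ u in (0 : ℝ)..z, Real.log |2 * Real.sin u|

/-- The local entropy as a function of the tilt `(s, t)`:
`ent(s,t) = (1/π)(L(πp_a) + L(πp_b) + L(πp_c) + L(πp_d))`. -/
noncomputable def ent (s t : ℝ) : ℝ :=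
  (1 / π) * (Lob (π * pA s t) + Lob (π * pB s t) +
    Lob (π * pC s t) + Lob (π * pD s t))

open MeasureTheory Set Filter Topology

theorem hasDerivAt_lob {z : ℝ} (hz : sin z ≠ 0) : HasDerivAt Lob (-log (2 * sin z)) z := by
  have hint : IntervalIntegrable (fun u => log |2 * sin u|) volume 0 z := by
    have han : AnalyticOnNhd ℝ (fun u => 2 * sin u) (uIcc 0 z) :=
      analyticOnNhd_const.mul analyticOnNhd_sin
    simpa using han.meromorphicOn.intervalIntegrable_log_norm
  have hmeas : StronglyMeasurableAtFilter (fun u => log |2 * sin u|) (𝓝 z) :=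
    (by fun_prop : Measurable fun u => log |2 * sin u|).stronglyMeasurable
      |>.stronglyMeasurableAtFilter
  have hcont : ContinuousAt (fun u => log |2 * sin u|) z := by
    fun_prop (disch := simpa using hz)
  have h := (intervalIntegral.integral_hasDerivAt_right hint hmeas hcont).neg
  rwa [Real.log_abs] at h

theorem hasDerivAt_log_two_mul_sin {z : ℝ} (hz : sin z ≠ 0) :
    HasDerivAt (fun u => log (2 * sin u)) (cos z / sin z) z := by
  convert ((hasDerivAt_sin z).const_mul 2).log (mul_ne_zero two_ne_zero hz) using 1
  field_simp

noncomputable def gradMap (a b : ℝ) : ℝ × ℝ →L[ℝ] ℝ :=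
  a • ContinuousLinearMap.fst ℝ ℝ ℝ + b • ContinuousLinearMap.snd ℝ ℝ ℝ

@[simp]
theorem gradMap_apply (a b : ℝ) (v : ℝ × ℝ) : gradMap a b v = a * v.1 + b * v.2 := rfl

theorem gradMap_add (a b c d : ℝ) : gradMap a b + gradMap c d = gradMap (a + c) (b + d) := by
  ext <;> simp

theorem gradMap_sub (a b c d : ℝ) : gradMap a b - gradMap c d = gradMap (a - c) (b - d) := by
  ext <;> simp

theorem neg_gradMap (a b : ℝ) : -gradMap a b = gradMap (-a) (-b) := by
  ext <;> simp

theorem smul_gradMap (c a b : ℝ) : c • gradMap a b = gradMap (c * a) (c * b) := by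
  ext <;> simp

theorem hasFDerivAt_fst_gradMap (x : ℝ × ℝ) : HasFDerivAt Prod.fst (gradMap 1 0) x := by
  refine (hasFDerivAt_fst (p := x)).congr_fderiv ?_
  ext <;> simp

theorem hasFDerivAt_snd_gradMap (x : ℝ × ℝ) : HasFDerivAt Prod.snd (gradMap 0 1) x := by
  refine (hasFDerivAt_snd (p := x)).congr_fderiv ?_
  ext <;> simp

theorem HasDerivAt.comp_gradMap {h : ℝ → ℝ} {h' : ℝ} {g : ℝ × ℝ → ℝ} {a b : ℝ} {x : ℝ × ℝ}
    (hh : HasDerivAt h h' (g x)) (hg : HasFDerivAt g (gradMap a b) x) :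
    HasFDerivAt (fun p => h (g p)) (gradMap (h' * a) (h' * b)) x :=
  (hh.comp_hasFDerivAt x hg).congr_fderiv (smul_gradMap _ _ _)

theorem HasFDerivAt.hasDerivAt_partial_fst {f : ℝ × ℝ → ℝ} {a b s t : ℝ}
    (hf : HasFDerivAt f (gradMap a b) (s, t)) : HasDerivAt (fun x => f (x, t)) a s := by
  refine (hf.comp_hasDerivAt s ((hasDerivAt_id s).prodMk (hasDerivAt_const s t))).congr_deriv ?_
  simp

theorem HasFDerivAt.hasDerivAt_partial_snd {f : ℝ × ℝ → ℝ} {a b s t : ℝ}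
    (hf : HasFDerivAt f (gradMap a b) (s, t)) : HasDerivAt (fun y => f (s, y)) b t := by
  refine (hf.comp_hasDerivAt t ((hasDerivAt_const t s).prodMk (hasDerivAt_id t))).congr_deriv ?_
  simp

theorem HasFDerivAt.hasDerivAt_add_smul {g : ℝ × ℝ → ℝ} {a b r : ℝ} {x w : ℝ × ℝ}
    (hg : HasFDerivAt g (gradMap a b) (x + r • w)) :
    HasDerivAt (fun r => g (x + r • w)) (a * w.1 + b * w.2) r := by
  have hline : HasDerivAt (fun r : ℝ => x + r • w) w r := by
    simpa using ((hasDerivAt_id r).smul_const w).const_add x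
  exact (hg.comp_hasDerivAt r hline).congr_deriv (by simp)

theorem quadratic_neg_of_negDef {A B C u v : ℝ} (hA : A < 0) (hdet : 0 < A * C - B ^ 2)
    (huv : (u, v) ≠ 0) : A * u ^ 2 + 2 * B * u * v + C * v ^ 2 < 0 := by
  rcases eq_or_ne v 0 with rfl | hv
  · have hu : u ≠ 0 := fun hu => huv (by simp [hu])
    nlinarith [sq_pos_of_ne_zero hu]
  · nlinarith [sq_nonneg (A * u + B * v), mul_pos hdet (sq_pos_of_ne_zero hv)]

theorem strictConcaveOn_of_hessian {U : Set (ℝ × ℝ)} (hU : Convex ℝ U)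
    {f f₁ f₂ h₁₁ h₁₂ h₂₂ : ℝ × ℝ → ℝ}
    (hf : ∀ p ∈ U, HasFDerivAt f (gradMap (f₁ p) (f₂ p)) p)
    (hf₁ : ∀ p ∈ U, HasFDerivAt f₁ (gradMap (h₁₁ p) (h₁₂ p)) p)
    (hf₂ : ∀ p ∈ U, HasFDerivAt f₂ (gradMap (h₁₂ p) (h₂₂ p)) p)
    (h₁₁_neg : ∀ p ∈ U, h₁₁ p < 0) (hdet : ∀ p ∈ U, 0 < h₁₁ p * h₂₂ p - h₁₂ p ^ 2) :
    StrictConcaveOn ℝ U f := by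
  refine ⟨hU, fun p hp q hq hpq a b ha hb hab => ?_⟩
  set w := q - p
  have hγ : ∀ r ∈ Icc (0 : ℝ) 1, p + r • w ∈ U := fun r hr => hU.add_smul_sub_mem hp hq hr
  have hφ' : ∀ r ∈ Icc (0 : ℝ) 1, HasDerivAt (fun r => f (p + r • w))
      (f₁ (p + r • w) * w.1 + f₂ (p + r • w) * w.2) r :=
    fun r hr => (hf _ (hγ r hr)).hasDerivAt_add_smul
  have hφ'' : ∀ r ∈ Icc (0 : ℝ) 1, HasDerivAt
      (fun r => f₁ (p + r • w) * w.1 + f₂ (p + r • w) * w.2)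
      (h₁₁ (p + r • w) * w.1 ^ 2 + 2 * h₁₂ (p + r • w) * w.1 * w.2
        + h₂₂ (p + r • w) * w.2 ^ 2) r := fun r hr =>
    (((hf₁ _ (hγ r hr)).hasDerivAt_add_smul.mul_const w.1).add
      ((hf₂ _ (hγ r hr)).hasDerivAt_add_smul.mul_const w.2)).congr_deriv (by ring)
  have hw : (w.1, w.2) ≠ 0 := sub_ne_zero.2 hpq.symm
  have hφ : StrictConcaveOn ℝ (Icc (0 : ℝ) 1) fun r => f (p + r • w) := by
    refine strictConcaveOn_of_deriv2_neg (convex_Icc 0 1)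
      (fun r hr => (hφ' r hr).continuousAt.continuousWithinAt) fun r hr => ?_
    rw [interior_Icc] at hr
    have hderiv : deriv (fun r => f (p + r • w)) =ᶠ[𝓝 r]
        fun r => f₁ (p + r • w) * w.1 + f₂ (p + r • w) * w.2 :=
      eventually_of_mem (isOpen_Ioo.mem_nhds hr) fun x hx => (hφ' x (Ioo_subset_Icc_self hx)).deriv
    have hr' := Ioo_subset_Icc_self hr
    rw [Function.iterate_succ_apply, Function.iterate_one, hderiv.deriv_eq, (hφ'' r hr').deriv]
    exact quadratic_neg_of_negDef (h₁₁_neg _ (hγ r hr')) (hdet _ (hγ r hr')) hw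
  have key := hφ.2 (left_mem_Icc.2 zero_le_one) (right_mem_Icc.2 zero_le_one) zero_ne_one ha hb hab
  have hab' : a • p + b • q = p + b • w := by
    rw [eq_sub_of_add_eq hab, sub_smul, one_smul, smul_sub]; abel
  simpa [hab', w] using key

theorem deriv_deriv_eq_of_hasFDerivAt {U : Set (ℝ × ℝ)} (hU : IsOpen U)
    {f f₁ f₂ h₁₁ h₁₂ h₂₂ : ℝ × ℝ → ℝ}
    (hf : ∀ p ∈ U, HasFDerivAt f (gradMap (f₁ p) (f₂ p)) p)
    (hf₁ : ∀ p ∈ U, HasFDerivAt f₁ (gradMap (h₁₁ p) (h₁₂ p)) p)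
    (hf₂ : ∀ p ∈ U, HasFDerivAt f₂ (gradMap (h₁₂ p) (h₂₂ p)) p) {s t : ℝ} (hst : (s, t) ∈ U) :
    deriv (fun x => deriv (fun y => f (y, t)) x) s = h₁₁ (s, t) ∧
      deriv (fun y => deriv (fun z => f (s, z)) y) t = h₂₂ (s, t) ∧
      deriv (fun x => deriv (fun y => f (x, y)) t) s = h₁₂ (s, t) := by
  have hs : ∀ᶠ x in 𝓝 s, (x, t) ∈ U :=
    (continuous_id.prodMk continuous_const).continuousAt.preimage_mem_nhds (hU.mem_nhds hst)
  have ht : ∀ᶠ y in 𝓝 t, (s, y) ∈ U :=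
    (continuous_const.prodMk continuous_id).continuousAt.preimage_mem_nhds (hU.mem_nhds hst)
  refine ⟨?_, ?_, ?_⟩
  · rw [EventuallyEq.deriv_eq (hs.mono fun x hx => (hf _ hx).hasDerivAt_partial_fst.deriv)]
    exact (hf₁ _ hst).hasDerivAt_partial_fst.deriv
  · rw [EventuallyEq.deriv_eq (ht.mono fun y hy => (hf _ hy).hasDerivAt_partial_snd.deriv)]
    exact (hf₂ _ hst).hasDerivAt_partial_snd.deriv
  · rw [EventuallyEq.deriv_eq (hs.mono fun x hx => (hf _ hx).hasDerivAt_partial_snd.deriv)]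
    exact (hf₂ _ hst).hasDerivAt_partial_fst.deriv

theorem convex_abs_add_abs_lt (r : ℝ) : Convex ℝ {p : ℝ × ℝ | |p.1| + |p.2| < r} := by
  have hc : ConvexOn ℝ univ fun p : ℝ × ℝ => |p.1| + |p.2| :=
    ((convexOn_norm convex_univ).comp_linearMap (LinearMap.fst ℝ ℝ ℝ)).add
      ((convexOn_norm convex_univ).comp_linearMap (LinearMap.snd ℝ ℝ ℝ))
  simpa using hc.convex_lt r

theorem cos_div_sin_eq_sin_add_sub_sin_sub {x y : ℝ} (hy : sin y ≠ 0) :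
    cos x / sin x = 2 * (sin (x + y) - sin (x - y)) / (4 * (sin x * sin y)) := by
  rw [sin_add, sin_sub]
  rcases eq_or_ne (sin x) 0 with hx | hx
  · simp [hx]
  · field_simp
    ring

/-- `cosSumAB` and `sinSumAB` are `cos` and `sin` of `π (p_a + p_b)`; `cosAddCos` is the
paper's `D'`. -/
noncomputable def cosSumAB (s t : ℝ) : ℝ := (cos (π * t / 2) - cos (π * s / 2)) / 2

noncomputable def sinSumAB (s t : ℝ) : ℝ := √(1 - cosSumAB s t ^ 2)

noncomputable def cosAddCos (s t : ℝ) : ℝ := cos (π * s / 2) + cos (π * t / 2)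

theorem pi_mul_pA_add_pB (s t : ℝ) : π * pA s t + π * pB s t = arccos (cosSumAB s t) := by
  simp only [pA, pB, cosSumAB]
  field_simp
  ring

theorem pi_mul_pA_sub_pB (s t : ℝ) : π * pA s t - π * pB s t = π * t / 2 := by
  simp only [pA, pB]
  ring

theorem pi_mul_pC_add_pD (s t : ℝ) : π * pC s t + π * pD s t = π - arccos (cosSumAB s t) := by
  have : (cos (π * s / 2) - cos (π * t / 2)) / 2 = -cosSumAB s t := by
    rw [cosSumAB]; ring
  simp only [pC, pD, this, arccos_neg]
  field_simp
  ring

theorem pi_mul_pD_sub_pC (s t : ℝ) : π * pD s t - π * pC s t = π * s / 2 := by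
  simp only [pC, pD]
  ring

theorem neg_one_le_cosSumAB (s t : ℝ) : -1 ≤ cosSumAB s t := by
  rw [cosSumAB]; linarith [neg_one_le_cos (π * t / 2), cos_le_one (π * s / 2)]

theorem cosSumAB_le_one (s t : ℝ) : cosSumAB s t ≤ 1 := by
  rw [cosSumAB]; linarith [cos_le_one (π * t / 2), neg_one_le_cos (π * s / 2)]

theorem cos_arccos_cosSumAB (s t : ℝ) : cos (arccos (cosSumAB s t)) = cosSumAB s t :=
  cos_arccos (neg_one_le_cosSumAB s t) (cosSumAB_le_one s t)

theorem sinSumAB_sq (s t : ℝ) : sinSumAB s t ^ 2 = 1 - cosSumAB s t ^ 2 :=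
  sq_sqrt (by nlinarith [neg_one_le_cosSumAB s t, cosSumAB_le_one s t])

theorem two_mul_sinSumAB_sq (s t : ℝ) :
    2 * sinSumAB s t ^ 2 = sin (π * s / 2) ^ 2 + sin (π * t / 2) ^ 2 + cosAddCos s t ^ 2 / 2 := by
  rw [sinSumAB_sq, cosSumAB, cosAddCos]
  linear_combination -sin_sq_add_cos_sq (π * s / 2) - sin_sq_add_cos_sq (π * t / 2)

theorem four_mul_sin_pi_mul_pA_mul_sin_pi_mul_pB (s t : ℝ) :
    4 * (sin (π * pA s t) * sin (π * pB s t)) = cosAddCos s t := by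
  have hc := cos_sub (π * pA s t) (π * pB s t)
  have hc' := cos_add (π * pA s t) (π * pB s t)
  rw [pi_mul_pA_sub_pB] at hc
  rw [pi_mul_pA_add_pB, cos_arccos_cosSumAB, cosSumAB] at hc'
  rw [cosAddCos]
  linear_combination 2 * hc' - 2 * hc

theorem four_mul_sin_pi_mul_pC_mul_sin_pi_mul_pD (s t : ℝ) :
    4 * (sin (π * pC s t) * sin (π * pD s t)) = cosAddCos s t := by
  have hc := cos_sub (π * pD s t) (π * pC s t)
  have hc' := cos_add (π * pC s t) (π * pD s t)
  rw [pi_mul_pD_sub_pC] at hc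
  rw [pi_mul_pC_add_pD, cos_pi_sub, cos_arccos_cosSumAB, cosSumAB] at hc'
  rw [cosAddCos]
  linear_combination 2 * hc' - 2 * hc

section TiltRegion

variable {s t : ℝ}

theorem abs_add_abs_lt_pi (h : |s| + |t| < 2) : |π * s / 2| + |π * t / 2| < π := by
  have hπ := pi_pos
  rw [abs_div, abs_div, abs_mul, abs_mul, abs_of_pos hπ, abs_two]
  nlinarith

theorem cosAddCos_pos (h : |s| + |t| < 2) : 0 < cosAddCos s t := by
  have hlt := abs_add_abs_lt_pi h
  have hcos := cos_lt_cos_of_nonneg_of_le_pi (abs_nonneg (π * s / 2))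
    (by linarith [abs_nonneg (π * t / 2)]) (by linarith : |π * s / 2| < π - |π * t / 2|)
  rw [cos_pi_sub, cos_abs, cos_abs] at hcos
  rw [cosAddCos]
  linarith

theorem abs_lt_arccos_cosSumAB (h : |s| + |t| < 2) : |π * t / 2| < arccos (cosSumAB s t) := by
  have hD := cosAddCos_pos h
  have hlt : cosSumAB s t < cos |π * t / 2| := by
    rw [cos_abs, cosSumAB]; rw [cosAddCos] at hD; linarith
  have hb : |π * t / 2| ≤ π := by linarith [abs_add_abs_lt_pi h, abs_nonneg (π * s / 2)]
  calc |π * t / 2| = arccos (cos |π * t / 2|) := (arccos_cos (abs_nonneg _) hb).symm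
    _ < arccos (cosSumAB s t) := arccos_lt_arccos (neg_one_le_cosSumAB s t) hlt (cos_le_one _)

theorem arccos_cosSumAB_lt (h : |s| + |t| < 2) : arccos (cosSumAB s t) < π - |π * s / 2| := by
  have hD := cosAddCos_pos h
  have hlt : -cos |π * s / 2| < cosSumAB s t := by
    rw [cos_abs, cosSumAB]; rw [cosAddCos] at hD; linarith
  have ha : |π * s / 2| ≤ π := by linarith [abs_add_abs_lt_pi h, abs_nonneg (π * t / 2)]
  calc arccos (cosSumAB s t) < arccos (-cos |π * s / 2|) :=
        arccos_lt_arccos (by linarith [cos_le_one |π * s / 2|]) hlt (cosSumAB_le_one s t)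
    _ = π - |π * s / 2| := by rw [arccos_neg, arccos_cos (abs_nonneg _) ha]

theorem sinSumAB_pos (h : |s| + |t| < 2) : 0 < sinSumAB s t := by
  rw [sinSumAB, ← sin_arccos]
  exact sin_pos_of_pos_of_lt_pi ((abs_nonneg _).trans_lt (abs_lt_arccos_cosSumAB h))
    ((arccos_cosSumAB_lt h).trans_le (by linarith [abs_nonneg (π * s / 2)]))

theorem sin_pi_mul_p_pos (h : |s| + |t| < 2) :
    0 < sin (π * pA s t) ∧ 0 < sin (π * pB s t) ∧ 0 < sin (π * pC s t) ∧ 0 < sin (π * pD s t) := by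
  -- the four angles are `(α ± πt/2) / 2` and `(π - α ± πs/2) / 2`, where `|πt/2| < α < π - |πs/2|`
  have h₁ := abs_lt_arccos_cosSumAB h
  have h₂ := arccos_cosSumAB_lt h
  refine ⟨?_, ?_, ?_, ?_⟩ <;> apply sin_pos_of_pos_of_lt_pi <;>
    linarith [pi_mul_pA_add_pB s t, pi_mul_pA_sub_pB s t, pi_mul_pC_add_pD s t,
      pi_mul_pD_sub_pC s t, le_abs_self (π * s / 2), neg_abs_le (π * s / 2),
      le_abs_self (π * t / 2), neg_abs_le (π * t / 2)]

end TiltRegion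

section Cotangents

variable {s t : ℝ}

theorem cot_pi_mul_pA (h : |s| + |t| < 2) :
    cos (π * pA s t) / sin (π * pA s t) = 2 * (sinSumAB s t - sin (π * t / 2)) / cosAddCos s t := by
  rw [cos_div_sin_eq_sin_add_sub_sin_sub (sin_pi_mul_p_pos h).2.1.ne',
    four_mul_sin_pi_mul_pA_mul_sin_pi_mul_pB, pi_mul_pA_add_pB, pi_mul_pA_sub_pB, sin_arccos,
    sinSumAB]

theorem cot_pi_mul_pB (h : |s| + |t| < 2) :
    cos (π * pB s t) / sin (π * pB s t) = 2 * (sinSumAB s t + sin (π * t / 2)) / cosAddCos s t := by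
  rw [cos_div_sin_eq_sin_add_sub_sin_sub (sin_pi_mul_p_pos h).1.ne', mul_comm (sin _),
    four_mul_sin_pi_mul_pA_mul_sin_pi_mul_pB, add_comm, pi_mul_pA_add_pB, ← neg_sub (π * pA s t),
    pi_mul_pA_sub_pB, sin_neg, sub_neg_eq_add, sin_arccos, sinSumAB]

theorem cot_pi_mul_pC (h : |s| + |t| < 2) :
    cos (π * pC s t) / sin (π * pC s t) = 2 * (sinSumAB s t + sin (π * s / 2)) / cosAddCos s t := by
  rw [cos_div_sin_eq_sin_add_sub_sin_sub (sin_pi_mul_p_pos h).2.2.2.ne',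
    four_mul_sin_pi_mul_pC_mul_sin_pi_mul_pD, pi_mul_pC_add_pD, ← neg_sub (π * pD s t),
    pi_mul_pD_sub_pC, sin_neg, sub_neg_eq_add, sin_pi_sub, sin_arccos, sinSumAB]

theorem cot_pi_mul_pD (h : |s| + |t| < 2) :
    cos (π * pD s t) / sin (π * pD s t) = 2 * (sinSumAB s t - sin (π * s / 2)) / cosAddCos s t := by
  rw [cos_div_sin_eq_sin_add_sub_sin_sub (sin_pi_mul_p_pos h).2.2.1.ne', mul_comm (sin _),
    four_mul_sin_pi_mul_pC_mul_sin_pi_mul_pD, add_comm, pi_mul_pC_add_pD, pi_mul_pD_sub_pC,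
    sin_pi_sub, sin_arccos, sinSumAB]

end Cotangents

section Gradient

variable {s t : ℝ}

theorem hasDerivAt_cos_pi_mul_div_two (x : ℝ) :
    HasDerivAt (fun x => cos (π * x / 2)) (-(π * sin (π * x / 2)) / 2) x := by
  convert (((hasDerivAt_id' x).const_mul π).div_const 2).cos using 1
  ring

theorem hasFDerivAt_cosSumAB (s t : ℝ) :
    HasFDerivAt (fun p : ℝ × ℝ => cosSumAB p.1 p.2)
      (gradMap (π * sin (π * s / 2) / 4) (-(π * sin (π * t / 2)) / 4)) (s, t) := by
  have hs := (hasDerivAt_cos_pi_mul_div_two s).comp_gradMap (hasFDerivAt_fst_gradMap (s, t))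
  have ht := (hasDerivAt_cos_pi_mul_div_two t).comp_gradMap (hasFDerivAt_snd_gradMap (s, t))
  refine ((ht.sub hs).mul_const 2⁻¹).congr_fderiv ?_
  rw [gradMap_sub, smul_gradMap]
  congr 1 <;> ring

theorem hasFDerivAt_arccos_cosSumAB (h : |s| + |t| < 2) :
    HasFDerivAt (fun p : ℝ × ℝ => arccos (cosSumAB p.1 p.2))
      (gradMap (-(π * sin (π * s / 2)) / (4 * sinSumAB s t))
        (π * sin (π * t / 2) / (4 * sinSumAB s t))) (s, t) := by
  have hQ := sinSumAB_pos h
  have hX : cosSumAB s t ≠ -1 ∧ cosSumAB s t ≠ 1 := by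
    constructor <;> rintro hX <;> simp [sinSumAB, hX] at hQ
  refine ((hasDerivAt_arccos hX.1 hX.2).comp_gradMap (hasFDerivAt_cosSumAB s t)).congr_fderiv ?_
  rw [← sinSumAB]
  congr 1 <;> field_simp

theorem hasFDerivAt_pi_mul_pA (h : |s| + |t| < 2) :
    HasFDerivAt (fun p : ℝ × ℝ => π * pA p.1 p.2)
      (gradMap (-(π * sin (π * s / 2)) / (8 * sinSumAB s t))
        (π / 4 + π * sin (π * t / 2) / (8 * sinSumAB s t))) (s, t) := by
  have e : (fun p : ℝ × ℝ => π * pA p.1 p.2) =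
      fun p => 2⁻¹ * (arccos (cosSumAB p.1 p.2) + π / 2 * p.2) := by
    funext p; linarith [pi_mul_pA_add_pB p.1 p.2, pi_mul_pA_sub_pB p.1 p.2]
  rw [e]
  refine (((hasFDerivAt_arccos_cosSumAB h).add
    ((hasFDerivAt_snd_gradMap (s, t)).const_mul (π / 2))).const_mul 2⁻¹).congr_fderiv ?_
  simp only [smul_gradMap, gradMap_add]
  congr 1 <;> ring

theorem hasFDerivAt_pi_mul_pB (h : |s| + |t| < 2) :
    HasFDerivAt (fun p : ℝ × ℝ => π * pB p.1 p.2)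
      (gradMap (-(π * sin (π * s / 2)) / (8 * sinSumAB s t))
        (-(π / 4) + π * sin (π * t / 2) / (8 * sinSumAB s t))) (s, t) := by
  have e : (fun p : ℝ × ℝ => π * pB p.1 p.2) =
      fun p => 2⁻¹ * (arccos (cosSumAB p.1 p.2) - π / 2 * p.2) := by
    funext p; linarith [pi_mul_pA_add_pB p.1 p.2, pi_mul_pA_sub_pB p.1 p.2]
  rw [e]
  refine (((hasFDerivAt_arccos_cosSumAB h).sub
    ((hasFDerivAt_snd_gradMap (s, t)).const_mul (π / 2))).const_mul 2⁻¹).congr_fderiv ?_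
  simp only [smul_gradMap, gradMap_sub]
  congr 1 <;> ring

theorem hasFDerivAt_pi_mul_pC (h : |s| + |t| < 2) :
    HasFDerivAt (fun p : ℝ × ℝ => π * pC p.1 p.2)
      (gradMap (-(π / 4) + π * sin (π * s / 2) / (8 * sinSumAB s t))
        (-(π * sin (π * t / 2)) / (8 * sinSumAB s t))) (s, t) := by
  have e : (fun p : ℝ × ℝ => π * pC p.1 p.2) =
      fun p => 2⁻¹ * (π - arccos (cosSumAB p.1 p.2) - π / 2 * p.1) := by
    funext p; linarith [pi_mul_pC_add_pD p.1 p.2, pi_mul_pD_sub_pC p.1 p.2]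
  rw [e]
  refine ((((hasFDerivAt_arccos_cosSumAB h).const_sub π).sub
    ((hasFDerivAt_fst_gradMap (s, t)).const_mul (π / 2))).const_mul 2⁻¹).congr_fderiv ?_
  simp only [smul_gradMap, neg_gradMap, gradMap_sub]
  congr 1 <;> ring

theorem hasFDerivAt_pi_mul_pD (h : |s| + |t| < 2) :
    HasFDerivAt (fun p : ℝ × ℝ => π * pD p.1 p.2)
      (gradMap (π / 4 + π * sin (π * s / 2) / (8 * sinSumAB s t))
        (-(π * sin (π * t / 2)) / (8 * sinSumAB s t))) (s, t) := by
  have e : (fun p : ℝ × ℝ => π * pD p.1 p.2) =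
      fun p => 2⁻¹ * (π - arccos (cosSumAB p.1 p.2) + π / 2 * p.1) := by
    funext p; linarith [pi_mul_pC_add_pD p.1 p.2, pi_mul_pD_sub_pC p.1 p.2]
  rw [e]
  refine ((((hasFDerivAt_arccos_cosSumAB h).const_sub π).add
    ((hasFDerivAt_fst_gradMap (s, t)).const_mul (π / 2))).const_mul 2⁻¹).congr_fderiv ?_
  simp only [smul_gradMap, neg_gradMap, gradMap_add]
  congr 1 <;> ring

noncomputable def entGradS (s t : ℝ) : ℝ :=
  (log (2 * sin (π * pC s t)) - log (2 * sin (π * pD s t))) / 4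

noncomputable def entGradT (s t : ℝ) : ℝ :=
  (log (2 * sin (π * pB s t)) - log (2 * sin (π * pA s t))) / 4

theorem log_two_mul_sin_add_log_two_mul_sin (h : |s| + |t| < 2) :
    log (2 * sin (π * pA s t)) + log (2 * sin (π * pB s t)) =
      log (2 * sin (π * pC s t)) + log (2 * sin (π * pD s t)) := by
  obtain ⟨hA, hB, hC, hD⟩ := sin_pi_mul_p_pos h
  rw [← log_mul (by positivity) (by positivity), ← log_mul (by positivity) (by positivity)]
  congr 1
  linear_combination four_mul_sin_pi_mul_pA_mul_sin_pi_mul_pB s t -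
    four_mul_sin_pi_mul_pC_mul_sin_pi_mul_pD s t

theorem hasFDerivAt_ent (h : |s| + |t| < 2) :
    HasFDerivAt (fun p : ℝ × ℝ => ent p.1 p.2) (gradMap (entGradS s t) (entGradT s t)) (s, t) := by
  obtain ⟨hA, hB, hC, hD⟩ := sin_pi_mul_p_pos h
  have hQ := sinSumAB_pos h
  refine ((((((hasDerivAt_lob hA.ne').comp_gradMap (hasFDerivAt_pi_mul_pA h)).add
    ((hasDerivAt_lob hB.ne').comp_gradMap (hasFDerivAt_pi_mul_pB h))).add
    ((hasDerivAt_lob hC.ne').comp_gradMap (hasFDerivAt_pi_mul_pC h))).add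
    ((hasDerivAt_lob hD.ne').comp_gradMap (hasFDerivAt_pi_mul_pD h))).const_mul
      (1 / π)).congr_fderiv ?_
  have hlog := log_two_mul_sin_add_log_two_mul_sin h
  simp only [gradMap_add, smul_gradMap, entGradS, entGradT]
  congr 1
  · field_simp
    linear_combination 4 * sin (π * s / 2) * hlog
  · field_simp
    linear_combination -4 * sin (π * t / 2) * hlog

end Gradient

section Hessian

variable {s t : ℝ}

/-- The paper's `S = sin(π(p_a + p_b)) sin(π p_a) sin(π p_b)` is `sinSumAB * cosAddCos / 4`,
so `32 S` is the common denominator `8 * sinSumAB * cosAddCos`. -/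
noncomputable def entSS (s t : ℝ) : ℝ :=
  -(π * (sin (π * t / 2) ^ 2 + cosAddCos s t ^ 2 / 2)) / (8 * sinSumAB s t * cosAddCos s t)

noncomputable def entTT (s t : ℝ) : ℝ :=
  -(π * (sin (π * s / 2) ^ 2 + cosAddCos s t ^ 2 / 2)) / (8 * sinSumAB s t * cosAddCos s t)

noncomputable def entST (s t : ℝ) : ℝ :=
  -(π * sin (π * s / 2) * sin (π * t / 2)) / (8 * sinSumAB s t * cosAddCos s t)

theorem hasFDerivAt_entGradS (h : |s| + |t| < 2) :
    HasFDerivAt (fun p : ℝ × ℝ => entGradS p.1 p.2) (gradMap (entSS s t) (entST s t)) (s, t) := by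
  obtain ⟨-, -, hC, hD⟩ := sin_pi_mul_p_pos h
  have hQ := sinSumAB_pos h
  have hD' := cosAddCos_pos h
  refine ((((hasDerivAt_log_two_mul_sin hC.ne').comp_gradMap (hasFDerivAt_pi_mul_pC h)).sub
    ((hasDerivAt_log_two_mul_sin hD.ne').comp_gradMap (hasFDerivAt_pi_mul_pD h))).mul_const
      4⁻¹).congr_fderiv ?_
  rw [cot_pi_mul_pC h, cot_pi_mul_pD h, gradMap_sub, smul_gradMap, entSS, entST]
  congr 1
  · field_simp
    linear_combination -32 * two_mul_sinSumAB_sq s t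
  · field_simp
    ring

theorem hasFDerivAt_entGradT (h : |s| + |t| < 2) :
    HasFDerivAt (fun p : ℝ × ℝ => entGradT p.1 p.2) (gradMap (entST s t) (entTT s t)) (s, t) := by
  obtain ⟨hA, hB, -, -⟩ := sin_pi_mul_p_pos h
  have hQ := sinSumAB_pos h
  have hD' := cosAddCos_pos h
  refine ((((hasDerivAt_log_two_mul_sin hB.ne').comp_gradMap (hasFDerivAt_pi_mul_pB h)).sub
    ((hasDerivAt_log_two_mul_sin hA.ne').comp_gradMap (hasFDerivAt_pi_mul_pA h))).mul_const
      4⁻¹).congr_fderiv ?_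
  rw [cot_pi_mul_pA h, cot_pi_mul_pB h, gradMap_sub, smul_gradMap, entTT, entST]
  congr 1
  · field_simp
    ring
  · field_simp
    linear_combination -32 * two_mul_sinSumAB_sq s t

theorem entSS_neg (h : |s| + |t| < 2) : entSS s t < 0 := by
  have := sinSumAB_pos h
  have := cosAddCos_pos h
  rw [entSS]
  exact div_neg_of_neg_of_pos (neg_neg_of_pos (by positivity)) (by positivity)

theorem entTT_neg (h : |s| + |t| < 2) : entTT s t < 0 := by
  have := sinSumAB_pos h
  have := cosAddCos_pos h
  rw [entTT]
  exact div_neg_of_neg_of_pos (neg_neg_of_pos (by positivity)) (by positivity)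

theorem entSS_mul_entTT_sub_entST_sq (h : |s| + |t| < 2) :
    entSS s t * entTT s t - entST s t ^ 2 = π ^ 2 / 64 := by
  have := sinSumAB_pos h
  have := cosAddCos_pos h
  rw [entSS, entTT, entST]
  field_simp
  linear_combination -128 * cosAddCos s t ^ 2 * two_mul_sinSumAB_sq s t

end Hessian

/-- Theorem `concavethm`:  on the open region `|s| + |t| < 2`, the Hessian of
`ent` is negative definite (`ent_ss < 0`, `ent_tt < 0`, and
`ent_ss·ent_tt - ent_st² > 0`); consequently `ent` is strictly concave there. -/
theorem ent_strictly_concave :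
    (∀ s t : ℝ, |s| + |t| < 2 →
      deriv (fun s' => deriv (fun s'' => ent s'' t) s') s < 0 ∧
      deriv (fun t' => deriv (fun t'' => ent s t'') t') t < 0 ∧
      deriv (fun s' => deriv (fun s'' => ent s'' t) s') s *
          deriv (fun t' => deriv (fun t'' => ent s t'') t') t -
        (deriv (fun s' => deriv (fun t' => ent s' t') t) s) ^ 2 > 0) ∧
    StrictConcaveOn ℝ {p : ℝ × ℝ | |p.1| + |p.2| < 2}
      (fun p => ent p.1 p.2) := by
  set U : Set (ℝ × ℝ) := {p | |p.1| + |p.2| < 2}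
  have hf : ∀ p ∈ U, HasFDerivAt (fun p => ent p.1 p.2)
      (gradMap (entGradS p.1 p.2) (entGradT p.1 p.2)) p := fun p hp => hasFDerivAt_ent hp
  have hf₁ : ∀ p ∈ U, HasFDerivAt (fun p => entGradS p.1 p.2)
      (gradMap (entSS p.1 p.2) (entST p.1 p.2)) p := fun p hp => hasFDerivAt_entGradS hp
  have hf₂ : ∀ p ∈ U, HasFDerivAt (fun p => entGradT p.1 p.2)
      (gradMap (entST p.1 p.2) (entTT p.1 p.2)) p := fun p hp => hasFDerivAt_entGradT hp
  refine ⟨fun s t h => ?_, strictConcaveOn_of_hessian (convex_abs_add_abs_lt 2) hf hf₁ hf₂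
    (fun p hp => entSS_neg hp) fun p hp => ?_⟩
  · obtain ⟨hss, htt, hst⟩ := deriv_deriv_eq_of_hasFDerivAt
      (isOpen_lt (by fun_prop) continuous_const) hf hf₁ hf₂ (s := s) (t := t) h
    dsimp only at hss htt hst
    rw [hss, htt, hst, entSS_mul_entTT_sub_entST_sq h]
    exact ⟨entSS_neg h, entTT_neg h, by positivity⟩
  · rw [entSS_mul_entTT_sub_entST_sq hp]
    positivity
end

section
/- For real s, t with |s| + |t| < 2, the first partial derivatives of the entropy function ent(s,t) = (1/π)(L(πp_a)+L(πp_b)+L(πp_c)+L(πp_d)) are given by ent_s(s,t) = -(1/4)·log( sin(πp_d)/sin(πp_c) ) and ent_t(s,t) = -(1/4)·log( sin(πp_a)/sin(πp_b) ). -/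
/-!
Put `θ = arccos ((cos (πt/2) - cos (πs/2)) / 2)`. Since `arccos (-x) = π - arccos x`, the four
angles are `πp_a, πp_b = ±πt/4 + θ/2` and `πp_c, πp_d = π/2 ∓ πs/4 - θ/2`, and the product formula
for sines gives `sin (πp_a) sin (πp_b) = sin (πp_c) sin (πp_d) = (cos (πs/2) + cos (πt/2)) / 4`.
Differentiating in `s` with `L' = -log |2 sin|`, the terms carrying `∂θ/∂s` have the factor
`log sin (πp_a) + log sin (πp_b) - log sin (πp_c) - log sin (πp_d) = 0`, so only the explicit
`∓ 1/4` in `∂p_c/∂s, ∂p_d/∂s` survives. The `t`-derivative follows from `ent s t = ent t s`.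
-/

open Real

open MeasureTheory

lemma intervalIntegrable_log_abs_two_mul_sin (a b : ℝ) :
    IntervalIntegrable (fun u => log |2 * sin u|) volume a b :=
  (analyticOnNhd_const.mul analyticOnNhd_sin).meromorphicOn.intervalIntegrable_log_norm

lemma hasDerivAt_Lob {z : ℝ} (hz : sin z ≠ 0) : HasDerivAt Lob (-log |2 * sin z|) z := by
  have hcont : ContinuousAt (fun u => log |2 * sin u|) z :=
    (continuous_const.mul continuous_sin).abs.continuousAt.log (by simpa using hz)
  have hmeas : Measurable fun u => log |2 * sin u| := by fun_prop
  exact (intervalIntegral.integral_hasDerivAt_right (intervalIntegrable_log_abs_two_mul_sin 0 z)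
    hmeas.stronglyMeasurable.stronglyMeasurableAtFilter hcont).neg

lemma log_abs_two_mul_sin {z : ℝ} (hz : sin z ≠ 0) : log |2 * sin z| = log 2 + log (sin z) := by
  rw [log_abs, log_mul two_ne_zero hz]

lemma cos_add_cos_pos {a b : ℝ} (h : |a| + |b| < π) : 0 < cos a + cos b := by
  have : cos (π - |b|) < cos |a| :=
    cos_lt_cos_of_nonneg_of_le_pi (abs_nonneg a) (by linarith [abs_nonneg b]) (by linarith)
  rw [cos_pi_sub, cos_abs, cos_abs] at this
  linarith

noncomputable def tiltAngle (s t : ℝ) : ℝ := arccos ((cos (π * t / 2) - cos (π * s / 2)) / 2)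

lemma tiltAngle_swap (s t : ℝ) : tiltAngle t s = π - tiltAngle s t := by
  rw [tiltAngle, tiltAngle, ← neg_sub, neg_div, arccos_neg]

lemma tiltAngle_le_pi (s t : ℝ) : tiltAngle s t ≤ π := arccos_le_pi _

lemma pi_mul_pA (s t : ℝ) : π * pA s t = π * t / 4 + tiltAngle s t / 2 := by
  rw [pA, tiltAngle]
  field_simp

lemma pi_mul_pB (s t : ℝ) : π * pB s t = -(π * t / 4) + tiltAngle s t / 2 := by
  rw [pB, tiltAngle]
  field_simp

lemma pC_eq_pB_swap (s t : ℝ) : pC s t = pB t s := rfl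

lemma pD_eq_pA_swap (s t : ℝ) : pD s t = pA t s := rfl

lemma ent_swap (s t : ℝ) : ent t s = ent s t := by
  simp only [ent, pC_eq_pB_swap, pD_eq_pA_swap]
  ring

lemma sin_pi_mul_pA_mul_sin_pi_mul_pB (s t : ℝ) :
    sin (π * pA s t) * sin (π * pB s t) = (cos (π * s / 2) + cos (π * t / 2)) / 4 := by
  have hcos : cos (tiltAngle s t) = (cos (π * t / 2) - cos (π * s / 2)) / 2 :=
    cos_arccos (by linarith [cos_le_one (π * s / 2), neg_one_le_cos (π * t / 2)])
      (by linarith [cos_le_one (π * t / 2), neg_one_le_cos (π * s / 2)])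
  have hu : cos (π * t / 2) = 2 * cos (π * t / 4) ^ 2 - 1 := by
    rw [← cos_two_mul]; ring_nf
  have hv : cos (tiltAngle s t) = 2 * cos (tiltAngle s t / 2) ^ 2 - 1 := by
    rw [← cos_two_mul]; ring_nf
  rw [pi_mul_pA, pi_mul_pB, sin_add, sin_add, sin_neg, cos_neg]
  linear_combination -cos (tiltAngle s t / 2) ^ 2 * sin_sq_add_cos_sq (π * t / 4)
    + cos (π * t / 4) ^ 2 * sin_sq_add_cos_sq (tiltAngle s t / 2) - hcos / 2 + hv / 2 - hu / 2

lemma sin_pi_mul_pC_mul_sin_pi_mul_pD (s t : ℝ) :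
    sin (π * pC s t) * sin (π * pD s t) = sin (π * pA s t) * sin (π * pB s t) := by
  rw [pC_eq_pB_swap, pD_eq_pA_swap, mul_comm, sin_pi_mul_pA_mul_sin_pi_mul_pB,
    sin_pi_mul_pA_mul_sin_pi_mul_pB, add_comm]

section

variable {s t : ℝ}

lemma cos_pi_mul_div_two_add_cos_pos (h : |s| + |t| < 2) :
    0 < cos (π * s / 2) + cos (π * t / 2) := by
  apply cos_add_cos_pos
  simp only [abs_div, abs_mul, abs_of_pos pi_pos, abs_two]
  nlinarith [pi_pos]

lemma abs_tiltAngle_arg_lt_one (h : |s| + |t| < 2) :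
    |(cos (π * t / 2) - cos (π * s / 2)) / 2| < 1 := by
  have := cos_pi_mul_div_two_add_cos_pos h
  rw [abs_lt]
  constructor <;> linarith [cos_le_one (π * s / 2), cos_le_one (π * t / 2)]

lemma abs_pi_mul_div_two_lt_tiltAngle (h : |s| + |t| < 2) : |π * t / 2| < tiltAngle s t := by
  have hpos := cos_pi_mul_div_two_add_cos_pos h
  have harg := abs_lt.1 (abs_tiltAngle_arg_lt_one h)
  have hle : |π * t / 2| ≤ π := by
    simp only [abs_div, abs_mul, abs_of_pos pi_pos, abs_two]
    nlinarith [pi_pos, abs_nonneg s]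
  calc |π * t / 2| = arccos (cos |π * t / 2|) := (arccos_cos (abs_nonneg _) hle).symm
    _ < tiltAngle s t := by
      rw [cos_abs]
      refine strictAntiOn_arccos ⟨harg.1.le, harg.2.le⟩
        ⟨neg_one_le_cos _, cos_le_one _⟩ ?_
      linarith

lemma sin_pi_mul_pA_pos (h : |s| + |t| < 2) : 0 < sin (π * pA s t) := by
  have hlt := abs_pi_mul_div_two_lt_tiltAngle h
  rw [pi_mul_pA]
  apply sin_pos_of_pos_of_lt_pi <;>
    linarith [le_abs_self (π * t / 2), neg_abs_le (π * t / 2), tiltAngle_le_pi s t]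

lemma sin_pi_mul_pB_pos (h : |s| + |t| < 2) : 0 < sin (π * pB s t) := by
  have hlt := abs_pi_mul_div_two_lt_tiltAngle h
  rw [pi_mul_pB]
  apply sin_pos_of_pos_of_lt_pi <;>
    linarith [le_abs_self (π * t / 2), neg_abs_le (π * t / 2), tiltAngle_le_pi s t]

lemma differentiableAt_tiltAngle_fst (h : |s| + |t| < 2) :
    DifferentiableAt ℝ (fun s' => tiltAngle s' t) s := by
  have harg := abs_lt.1 (abs_tiltAngle_arg_lt_one h)
  exact (differentiableAt_arccos.2 ⟨harg.1.ne', harg.2.ne⟩).comp s (by fun_prop)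

lemma hasDerivAt_ent_fst (h : |s| + |t| < 2) :
    HasDerivAt (fun s' => ent s' t)
      (-(1 / 4) * log (sin (π * pD s t) / sin (π * pC s t))) s := by
  set θ' := deriv (fun s' => tiltAngle s' t) s
  have hθ : HasDerivAt (fun s' => tiltAngle s' t) θ' s :=
    (differentiableAt_tiltAngle_fst h).hasDerivAt
  have hA : HasDerivAt (fun s' => π * pA s' t) (θ' / 2) s := by
    simp only [pi_mul_pA]
    exact (hθ.div_const 2).const_add _
  have hB : HasDerivAt (fun s' => π * pB s' t) (θ' / 2) s := by
    simp only [pi_mul_pB]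
    exact (hθ.div_const 2).const_add _
  have hC : HasDerivAt (fun s' => π * pC s' t) (-(π / 4) - θ' / 2) s := by
    simp only [pC_eq_pB_swap, pi_mul_pB, tiltAngle_swap _ t]
    exact ((((hasDerivAt_id s).const_mul π).div_const 4).neg.add
      ((hθ.const_sub π).div_const 2)).congr_deriv (by ring)
  have hD : HasDerivAt (fun s' => π * pD s' t) (π / 4 - θ' / 2) s := by
    simp only [pD_eq_pA_swap, pi_mul_pA, tiltAngle_swap _ t]
    exact ((((hasDerivAt_id s).const_mul π).div_const 4).add
      ((hθ.const_sub π).div_const 2)).congr_deriv (by ring)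
  have h' : |t| + |s| < 2 := by rwa [add_comm]
  have hsA := (sin_pi_mul_pA_pos h).ne'
  have hsB := (sin_pi_mul_pB_pos h).ne'
  have hsC : sin (π * pC s t) ≠ 0 := (sin_pi_mul_pB_pos h').ne'
  have hsD : sin (π * pD s t) ≠ 0 := (sin_pi_mul_pA_pos h').ne'
  have hprod : log (sin (π * pA s t)) + log (sin (π * pB s t)) =
      log (sin (π * pC s t)) + log (sin (π * pD s t)) := by
    rw [← log_mul hsA hsB, ← log_mul hsC hsD, sin_pi_mul_pC_mul_sin_pi_mul_pD]
  refine (((((hasDerivAt_Lob hsA).comp s hA).add ((hasDerivAt_Lob hsB).comp s hB)).add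
    ((hasDerivAt_Lob hsC).comp s hC)).add ((hasDerivAt_Lob hsD).comp s hD)).const_mul
    (1 / π) |>.congr_deriv ?_
  rw [log_abs_two_mul_sin hsA, log_abs_two_mul_sin hsB, log_abs_two_mul_sin hsC,
    log_abs_two_mul_sin hsD, log_div hsD hsC]
  field_simp
  linear_combination -4 * θ' * hprod

end

/-- The first partial derivatives of the local entropy `ent(s,t)` for
`|s| + |t| < 2`:
`ent_s(s,t) = -(1/4)·log(sin(πp_d)/sin(πp_c))` and
`ent_t(s,t) = -(1/4)·log(sin(πp_a)/sin(πp_b))`. -/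
theorem ent_first_derivatives (s t : ℝ) (h : |s| + |t| < 2) :
    deriv (fun s' => ent s' t) s =
      -(1 / 4) * Real.log (sin (π * pD s t) / sin (π * pC s t)) ∧
    deriv (fun t' => ent s t') t =
      -(1 / 4) * Real.log (sin (π * pA s t) / sin (π * pB s t)) := by
  refine ⟨(hasDerivAt_ent_fst h).deriv, ?_⟩
  have hswap : (fun t' => ent s t') = fun t' => ent t' s := funext fun t' => ent_swap t' s
  rw [hswap, (hasDerivAt_ent_fst (s := t) (by rwa [add_comm])).deriv, pD_eq_pA_swap,
    pC_eq_pB_swap]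
end
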